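/- Set n0 := ⌊130^q⌋. For every k ≥ k0, every n ≥ 1, and every n-optimal set α_n ∈ C_{n,r}(μ), the number of points of α_n lying outside ⋃_{σ∈Ω_k} B(c_σ, (9/4)·m^{-k}) is at most n0·φ_k. -/

import Mathlib

open MeasureTheory Metric Set

noncomputable section

variable {E : Type*} [NormedAddCommGroup E] [NormedSpace ℝ E]
  [MeasurableSpace E] [BorelSpace E]

/-- The (topological) support of a Borel measure: the set of points all of whose
neighborhoods have positive measure. -/
def msupp (μ : Measure E) : Set E := {x | ∀ ε : ℝ, 0 < ε → 0 < μ (ball x ε)}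

/-- The set of achievable quantization integrals `∫ d(x,α)^r dν` over sets `α` with
`1 ≤ card α ≤ n`. -/
def quantSet (ν : Measure E) (r : ℝ) (n : ℕ) : Set ℝ :=
  {I | ∃ α : Finset E, α.Nonempty ∧ α.card ≤ n ∧ I = ∫ x, infDist x (α : Set E) ^ r ∂ν}

/-- The `n`-th quantization error of order `r`, raised to the power `r`:
`e_{n,r}(ν)^r = inf { ∫ d(x,α)^r dν : 1 ≤ card α ≤ n }`. -/
def quantErrPow (ν : Measure E) (r : ℝ) (n : ℕ) : ℝ := sInf (quantSet ν r n)

/-- `α` is an `n`-optimal set for `ν` of order `r`. -/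
def IsOptimalSet (ν : Measure E) (r : ℝ) (n : ℕ) (α : Finset E) : Prop :=
  α.Nonempty ∧ α.card ≤ n ∧ (∫ x, infDist x (α : Set E) ^ r ∂ν) = quantErrPow ν r n

/-- `P` is a Voronoi partition (into Borel sets) with respect to the finite set `α`. -/
def IsVoronoiPartition (α : Finset E) (P : E → Set E) : Prop :=
  (∀ a ∈ α, MeasurableSet (P a)) ∧
  ((⋃ a ∈ α, P a) = univ) ∧
  (∀ a ∈ α, ∀ b ∈ α, a ≠ b → Disjoint (P a) (P b)) ∧
  (∀ a ∈ α, {x | dist x a < infDist x ((α : Set E) \ {a})} ⊆ P a) ∧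
  (∀ a ∈ α, P a ⊆ {x | dist x a = infDist x (α : Set E)})

/-- `I_a(α,ν) = ∫_{P_a(α)} d(x,α)^r dν`. -/
def voronoiI (ν : Measure E) (r : ℝ) (α : Finset E) (P : E → Set E) (a : E) : ℝ :=
  ∫ x in P a, infDist x (α : Set E) ^ r ∂ν

/-- `μ` is `s0`-dimensional Ahlfors–David regular with constants `ε0, C1, C2`, together
with the global upper bound (valid for all centers and radii). -/
def IsAhlfors (μ : Measure E) (s0 ε0 C1 C2 : ℝ) : Prop :=
  0 < s0 ∧ 0 < ε0 ∧ 0 < C1 ∧ 0 < C2 ∧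
  (∀ x ∈ msupp μ, ∀ ε : ℝ, 0 < ε → ε < ε0 →
    ENNReal.ofReal (C1 * ε ^ s0) ≤ μ (closedBall x ε) ∧
    μ (closedBall x ε) ≤ ENNReal.ofReal (C2 * ε ^ s0)) ∧
  (∀ x : E, ∀ ε : ℝ, 0 < ε → μ (closedBall x ε) ≤ ENNReal.ofReal (C2 * ε ^ s0))

/-- `h` is a similitude of ratio `ρ`. -/
def IsSimilitude (h : E → E) (ρ : ℝ) : Prop :=
  Function.Surjective h ∧ ∀ x y, dist (h x) (h y) = ρ * dist x y

/-- The measure `λ_B = μ(·|B) ∘ h`, i.e. `λ_B(A) = μ(h(A) ∩ B)/μ(B)`. -/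
def condPull (μ : Measure E) (B : Set E) (h : E → E) : Measure E :=
  Measure.comap h (ProbabilityTheory.cond μ B)

/-- There exist `j` pairwise disjoint closed balls of radius `ρ` centered in `K`. -/
def PackingNum (K : Set E) (ρ : ℝ) (j : ℕ) : Prop :=
  ∃ c : Fin j → E, (∀ i, c i ∈ K) ∧
    Pairwise fun i i' => Disjoint (closedBall (c i) ρ) (closedBall (c i') ρ)

end

/-!
Suppose more than `130^q φ_k` points of an optimal set `α` lay outside the balls
`B(c_σ, (9/4) m^{-k})`. By maximality of the packing, the balls `B(c_σ, 2 m^{-k})` cover `K`, and a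
volume count covers each of them by `17^q` balls of radius `m^{-k}/4`; every far point of `α` is at
distance at least `m^{-k}/4` from all of `K`. Trading the far points for this net, plus one point of
`K` outside all these sets (`μ` has no atoms), yields an admissible set that is never farther from
points of `K` than `α` and strictly closer near the new point, so its quantization integral is
strictly smaller: a contradiction.
-/

open scoped ENNReal NNReal
open Module Filter Topology

theorem exists_finset_subset_isCover_of_forall_card_le {X : Type*} [PseudoEMetricSpace X]
    {A : Set X} {δ : ℝ≥0} {M : ℕ}
    (hM : ∀ F : Finset X, (F : Set X) ⊆ A → IsSeparated δ (F : Set X) → F.card ≤ M) :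
    ∃ T : Finset X, (T : Set X) ⊆ A ∧ T.card ≤ M ∧ IsCover δ A T := by
  have hP : packingNumber δ A ≤ M := iSup₂_le fun C hCA => iSup_le fun hC => by
    by_contra! h
    obtain ⟨t, htC, ht⟩ := exists_subset_encard_eq (Order.add_one_le_of_lt h)
    have htfin : t.Finite := finite_of_encard_eq_coe (k := M + 1) (by simpa using ht)
    have hcard := hM htfin.toFinset (by simpa using htC.trans hCA) (by simpa using hC.subset htC)
    have hteq : (M + 1 : ℕ) = htfin.toFinset.card := by
      exact_mod_cast ht.symm.trans htfin.encard_eq_coe_toFinset_card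
    omega
  have hPtop : packingNumber δ A ≠ ⊤ := ne_top_of_le_ne_top (by simp) hP
  have hfin : (maximalSeparatedSet δ A).Finite := by
    rw [← encard_ne_top_iff, encard_maximalSeparatedSet hPtop]
    exact hPtop
  refine ⟨hfin.toFinset, by simpa using maximalSeparatedSet_subset, ?_, ?_⟩
  · rw [← ENat.natCast_le_natCast, ← hfin.encard_eq_coe_toFinset_card,
      encard_maximalSeparatedSet hPtop]
    exact hP
  · simpa using isCover_maximalSeparatedSet hPtop

section Packing

variable {E : Type*} [NormedAddCommGroup E]

theorem Metric.IsSeparated.pairwiseDisjoint_closedBall {s : Set E} {δ : ℝ≥0}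
    (hs : IsSeparated δ s) : s.PairwiseDisjoint (closedBall · (δ / 2)) := fun x hx y hy hxy => by
  have h : (δ : ℝ≥0∞) < edist x y := hs hx hy hxy
  rw [edist_nndist, ENNReal.coe_lt_coe, ← NNReal.coe_lt_coe, coe_nndist] at h
  exact closedBall_disjoint_closedBall (by linarith)

theorem exists_dist_le_two_mul_of_isGreatest_packingNum {K : Set E} {ρ : ℝ} {φ : ℕ}
    (hφ : IsGreatest {j | PackingNum K ρ j} φ) {c : Fin φ → E} (hcK : ∀ i, c i ∈ K)
    (hc : Pairwise fun i i' => Disjoint (closedBall (c i) ρ) (closedBall (c i') ρ))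
    {y : E} (hy : y ∈ K) : ∃ i, dist y (c i) ≤ 2 * ρ := by
  by_contra! hfar
  have hpack : PackingNum K ρ (φ + 1) := by
    refine ⟨Fin.cons y c, Fin.cases hy hcK, ?_⟩
    intro i j hij
    cases i using Fin.cases <;> cases j using Fin.cases
    · exact absurd rfl hij
    · exact closedBall_disjoint_closedBall (by simpa [two_mul] using hfar _)
    · exact closedBall_disjoint_closedBall (by simpa [two_mul, dist_comm] using hfar _)
    · exact hc fun h => hij (congrArg Fin.succ h)
  have := hφ.2 hpack
  omega

variable [NormedSpace ℝ E] [FiniteDimensional ℝ E]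

theorem Finset.card_le_of_isSeparated_of_subset_closedBall {F : Finset E} {c : E} {R : ℝ}
    {δ : ℝ≥0} {N : ℕ} (hδ : 0 < δ) (hN : 2 * R + δ ≤ N * δ)
    (hsep : IsSeparated δ (F : Set E)) (hF : (F : Set E) ⊆ closedBall c R) :
    F.card ≤ N ^ finrank ℝ E := by
  borelize E
  set ν : Measure E := Measure.addHaar
  have hsub : ⋃ x ∈ F, closedBall x (δ / 2) ⊆ closedBall c (N * (δ / 2)) :=
    iUnion₂_subset fun x hx => closedBall_subset_closedBall' (by
      have := hF hx
      rw [mem_closedBall] at this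
      linarith)
  have hv0 : ν (closedBall 0 (δ / 2)) ≠ 0 := (measure_closedBall_pos ν 0 (by positivity)).ne'
  have hvtop : ν (closedBall 0 (δ / 2)) ≠ ⊤ := measure_closedBall_lt_top.ne
  have key : (F.card : ℝ≥0∞) * ν (closedBall 0 (δ / 2))
      ≤ (N : ℝ≥0∞) ^ finrank ℝ E * ν (closedBall 0 (δ / 2)) :=
    calc (F.card : ℝ≥0∞) * ν (closedBall 0 (δ / 2))
        = ∑ x ∈ F, ν (closedBall x (δ / 2)) := by
          simp [Measure.addHaar_closedBall_center ν]
      _ = ν (⋃ x ∈ F, closedBall x (δ / 2)) :=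
          (measure_biUnion_finset hsep.pairwiseDisjoint_closedBall fun _ _ =>
            measurableSet_closedBall).symm
      _ ≤ ν (closedBall c (N * (δ / 2))) := measure_mono hsub
      _ = (N : ℝ≥0∞) ^ finrank ℝ E * ν (closedBall 0 (δ / 2)) := by
          rw [Measure.addHaar_closedBall_mul ν c (Nat.cast_nonneg N) (by positivity),
            ENNReal.ofReal_pow (Nat.cast_nonneg _), ENNReal.ofReal_natCast]
  exact_mod_cast (ENNReal.mul_le_mul_iff_left hv0 hvtop).1 key

theorem exists_finset_card_le_forall_dist_le (c : E) {R δ : ℝ} {N : ℕ} (hδ : 0 < δ)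
    (hN : 2 * R + δ ≤ N * δ) :
    ∃ T : Finset E, T.card ≤ N ^ finrank ℝ E ∧ ∀ y ∈ closedBall c R, ∃ t ∈ T, dist y t ≤ δ := by
  lift δ to ℝ≥0 using hδ.le
  obtain ⟨T, -, hTcard, hT⟩ := exists_finset_subset_isCover_of_forall_card_le
    (A := closedBall c R) fun F hF hsep =>
      F.card_le_of_isSeparated_of_subset_closedBall hδ hN hsep hF
  refine ⟨T, hTcard, fun y hy => ?_⟩
  simpa using hT.subset_iUnion_closedBall hy

theorem exists_finset_card_le_forall_dist_le_of_isGreatest_packingNum {K : Set E} {ρ : ℝ}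
    (hρ : 0 < ρ) {φ : ℕ} (hφ : IsGreatest {j | PackingNum K ρ j} φ) {c : Fin φ → E}
    (hcK : ∀ i, c i ∈ K)
    (hc : Pairwise fun i i' => Disjoint (closedBall (c i) ρ) (closedBall (c i') ρ)) :
    ∃ Γ : Finset E, Γ.card ≤ φ * 17 ^ finrank ℝ E ∧ ∀ y ∈ K, ∃ g ∈ Γ, dist y g ≤ ρ / 4 := by
  classical
  choose T hTcard hT using fun i => exists_finset_card_le_forall_dist_le (c i)
    (R := 2 * ρ) (δ := ρ / 4) (N := 17) (by positivity) (by norm_num; linarith)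
  refine ⟨Finset.univ.biUnion T, ?_, fun y hy => ?_⟩
  · simpa using Finset.card_biUnion_le_card_mul Finset.univ T _ fun i _ => hTcard i
  · obtain ⟨i, hi⟩ := exists_dist_le_two_mul_of_isGreatest_packingNum hφ hcK hc hy
    obtain ⟨g, hg, hyg⟩ := hT i y (mem_closedBall.2 hi)
    exact ⟨g, Finset.mem_biUnion.2 ⟨i, Finset.mem_univ i, hg⟩, hyg⟩

end Packing

section Support

variable {E : Type*} [NormedAddCommGroup E] [MeasurableSpace E]

theorem msupp_eq_support (μ : Measure E) : msupp μ = μ.support := by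
  ext x
  exact nhds_basis_ball.mem_measureSupport.symm

theorem isClosed_msupp (μ : Measure E) : IsClosed (msupp μ) :=
  msupp_eq_support μ ▸ Measure.isClosed_support

theorem ae_mem_msupp [HereditarilyLindelofSpace E] (μ : Measure E) : ∀ᵐ x ∂μ, x ∈ msupp μ :=
  msupp_eq_support μ ▸ Measure.support_mem_ae

variable {μ : Measure E} {s0 ε0 C1 C2 : ℝ}

theorem IsAhlfors.nullSingletonClass (hμ : IsAhlfors μ s0 ε0 C1 C2) : NullSingletonClass μ := by
  obtain ⟨hs0, -, -, -, -, hglob⟩ := hμ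
  refine ⟨fun x => le_antisymm ?_ bot_le⟩
  have hcont : Continuous fun ε : ℝ => C2 * ε ^ s0 :=
    continuous_const.mul (Real.continuous_rpow_const hs0.le)
  have hlim : Tendsto (fun ε : ℝ => ENNReal.ofReal (C2 * ε ^ s0)) (𝓝[>] 0) (𝓝 0) := by
    simpa [Real.zero_rpow hs0.ne'] using
      ENNReal.tendsto_ofReal ((hcont.tendsto 0).mono_left nhdsWithin_le_nhds)
  refine ge_of_tendsto hlim (eventually_nhdsWithin_of_forall fun ε hε => ?_)
  exact (measure_mono (singleton_subset_iff.2 (mem_closedBall_self (le_of_lt hε)))).trans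
    (hglob x ε hε)

theorem IsAhlfors.card_mul_le_of_isSeparated [OpensMeasurableSpace E] {ε0 : ℝ≥0}
    (hμ : IsAhlfors μ s0 ε0 C1 C2) {F : Finset E} (hFK : (F : Set E) ⊆ msupp μ)
    (hsep : IsSeparated ε0 (F : Set E)) :
    (F.card : ℝ≥0∞) * ENNReal.ofReal (C1 * (ε0 / 2) ^ s0) ≤ μ univ := by
  obtain ⟨-, hε0, -, -, hreg, -⟩ := hμ
  calc (F.card : ℝ≥0∞) * ENNReal.ofReal (C1 * (ε0 / 2) ^ s0)
      = ∑ _x ∈ F, ENNReal.ofReal (C1 * (ε0 / 2) ^ s0) := by simp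
    _ ≤ ∑ x ∈ F, μ (closedBall x (ε0 / 2)) := Finset.sum_le_sum fun x hx =>
        (hreg x (hFK hx) _ (half_pos hε0) (half_lt_self hε0)).1
    _ = μ (⋃ x ∈ F, closedBall x (ε0 / 2)) :=
        (measure_biUnion_finset hsep.pairwiseDisjoint_closedBall fun _ _ =>
          measurableSet_closedBall).symm
    _ ≤ μ univ := measure_mono (subset_univ _)

theorem IsAhlfors.isBounded_msupp [OpensMeasurableSpace E] [IsFiniteMeasure μ]
    (hμ : IsAhlfors μ s0 ε0 C1 C2) : Bornology.IsBounded (msupp μ) := by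
  lift ε0 to ℝ≥0 using hμ.2.1.le
  have hv0 : ENNReal.ofReal (C1 * (ε0 / 2) ^ s0) ≠ 0 := by
    obtain ⟨hs0, hε0, hC1, -⟩ := hμ
    positivity
  obtain ⟨M, hM⟩ := ENNReal.exists_nat_gt (ENNReal.div_ne_top (measure_ne_top μ univ) hv0)
  obtain ⟨T, -, -, hT⟩ := exists_finset_subset_isCover_of_forall_card_le (A := msupp μ)
    (δ := ε0) (M := M) fun F hFK hsep => by
      have := (ENNReal.le_div_iff_mul_le (Or.inl hv0) (Or.inl ENNReal.ofReal_ne_top)).2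
        (hμ.card_mul_le_of_isSeparated hFK hsep)
      exact_mod_cast this.trans hM.le
  exact ((Bornology.isBounded_biUnion_finset T).2 fun t _ => isBounded_closedBall).subset
    hT.subset_iUnion_closedBall

theorem IsAhlfors.isCompact_msupp [OpensMeasurableSpace E] [ProperSpace E] [IsFiniteMeasure μ]
    (hμ : IsAhlfors μ s0 ε0 C1 C2) : IsCompact (msupp μ) :=
  isCompact_of_isClosed_isBounded (isClosed_msupp μ) hμ.isBounded_msupp

end Support

section Quantization

variable {E : Type*} [NormedAddCommGroup E] [MeasurableSpace E] {ν : Measure E} {r : ℝ} {n : ℕ}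
  {α : Finset E}

theorem IsOptimalSet.integral_le (hα : IsOptimalSet ν r n α) {β : Finset E} (hβ : β.Nonempty)
    (hβn : β.card ≤ n) :
    ∫ x, infDist x (α : Set E) ^ r ∂ν ≤ ∫ x, infDist x (β : Set E) ^ r ∂ν := by
  rw [hα.2.2]
  refine csInf_le ⟨0, ?_⟩ ⟨β, hβ, hβn, rfl⟩
  rintro _ ⟨γ, -, -, rfl⟩
  exact integral_nonneg fun x => Real.rpow_nonneg infDist_nonneg r

theorem integral_lt_integral_of_continuous_of_mem_msupp {f g : E → ℝ} (hf : Integrable f ν)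
    (hg : Integrable g ν) (hfc : Continuous f) (hgc : Continuous g) (hfg : f ≤ᵐ[ν] g) {z : E}
    (hz : z ∈ msupp ν) (hlt : f z < g z) : ∫ x, f x ∂ν < ∫ x, g x ∂ν := by
  rw [← sub_pos, ← integral_sub hg hf]
  refine (integral_pos_iff_support_of_nonneg_ae (hfg.mono fun x hx => sub_nonneg.2 hx)
    (hg.sub hf)).2 ?_
  obtain ⟨ε, hε, hball⟩ := Metric.isOpen_iff.1 (isOpen_lt hfc hgc) z hlt
  exact (hz ε hε).trans_le (measure_mono fun x hx => (sub_pos.2 (hball hx)).ne')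

theorem integrable_infDist_rpow [HereditarilyLindelofSpace E] [OpensMeasurableSpace E]
    [IsFiniteMeasure ν] (hK : IsCompact (msupp ν)) (hr : 0 ≤ r) (s : Set E) :
    Integrable (fun x => infDist x s ^ r) ν := by
  rw [← Measure.restrict_eq_self_of_ae_mem (ae_mem_msupp ν)]
  exact ((continuous_infDist_pt s).rpow_const fun _ => Or.inr hr).continuousOn.integrableOn_compact
    hK

theorem IsOptimalSet.card_le_card_of_forall_dist_le [HereditarilyLindelofSpace E]
    [OpensMeasurableSpace E] [IsFiniteMeasure ν] [NeZero ν] [NullSingletonClass ν]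
    (hK : IsCompact (msupp ν)) (hr : 0 < r) (hα : IsOptimalSet ν r n α) {S Γ : Finset E} {d : ℝ}
    (hS : S ⊆ α) (hΓ : ∀ y ∈ msupp ν, ∃ g ∈ Γ, dist y g ≤ d)
    (hSfar : ∀ a ∈ S, ∀ y ∈ msupp ν, d ≤ dist y a) :
    S.card ≤ Γ.card := by
  classical
  by_contra! hlt
  obtain ⟨z, hzK, hz⟩ := ((ae_mem_msupp ν).and ((α ∪ Γ).countable_toSet.ae_notMem ν)).exists
  set β := insert z (α \ S ∪ Γ)
  have hβn : β.card ≤ n := by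
    have := Finset.card_sdiff_of_subset hS
    have := Finset.card_le_card hS
    have := Finset.card_union_le (α \ S) Γ
    have : β.card ≤ (α \ S ∪ Γ).card + 1 := Finset.card_insert_le _ _
    have := hα.2.1
    omega
  have hβα : ∀ y ∈ msupp ν, infDist y (β : Set E) ≤ infDist y (α : Set E) := fun y hy =>
    (le_infDist (Finset.coe_nonempty.2 hα.1)).2 fun a ha => by
      by_cases haS : a ∈ S
      · obtain ⟨g, hg, hyg⟩ := hΓ y hy
        exact (infDist_le_dist_of_mem (by simp [β, hg])).trans (hyg.trans (hSfar a haS y hy))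
      · exact infDist_le_dist_of_mem (by simp [β, ha, haS])
  have hzβα : infDist z (β : Set E) < infDist z (α : Set E) := by
    rw [infDist_zero_of_mem (by simp [β])]
    exact (α.finite_toSet.isClosed.notMem_iff_infDist_pos (Finset.coe_nonempty.2 hα.1)).1
      (by simp_all)
  have hcont : ∀ s : Set E, Continuous fun x => infDist x s ^ r := fun s =>
    (continuous_infDist_pt s).rpow_const fun _ => Or.inr hr.le
  refine (hα.integral_le ⟨z, Finset.mem_insert_self _ _⟩ hβn).not_gt
    (integral_lt_integral_of_continuous_of_mem_msupp (integrable_infDist_rpow hK hr.le _)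
      (integrable_infDist_rpow hK hr.le _) (hcont _) (hcont _) ?_ hzK
      (Real.rpow_lt_rpow infDist_nonneg hzβα hr))
  exact (ae_mem_msupp ν).mono fun y hy => Real.rpow_le_rpow infDist_nonneg (hβα y hy) hr.le

end Quantization

theorem stmt11_general {E : Type*} [NormedAddCommGroup E] [NormedSpace ℝ E]
    [MeasurableSpace E] [BorelSpace E] [FiniteDimensional ℝ E]
    (q : ℕ) (hq : Module.finrank ℝ E = q)
    (r : ℝ) (hr : 0 < r)
    (μ : MeasureTheory.Measure E) [MeasureTheory.IsProbabilityMeasure μ]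
    (s0 ε0 C1 C2 : ℝ) (hμ : IsAhlfors μ s0 ε0 C1 C2)
    (m : ℕ) (hm : 2 ≤ m) (k0 : ℕ)
    (φ : ℕ → ℕ)
    (hφ : ∀ k, k0 ≤ k →
      IsGreatest {j | PackingNum (msupp μ) (((m : ℝ) ^ k)⁻¹) j} (φ k))
    (ctr : (k : ℕ) → Fin (φ k) → E)
    (hctr : ∀ k, k0 ≤ k → (∀ i, ctr k i ∈ msupp μ) ∧
      Pairwise fun i i' => Disjoint (Metric.closedBall (ctr k i) (((m : ℝ) ^ k)⁻¹))
        (Metric.closedBall (ctr k i') (((m : ℝ) ^ k)⁻¹))) :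
    ∀ k, k0 ≤ k → ∀ n : ℕ, 1 ≤ n → ∀ α : Finset E, IsOptimalSet μ r n α →
      {a ∈ (α : Set E) |
          ∀ i : Fin (φ k), a ∉ Metric.closedBall (ctr k i) ((9 / 4 : ℝ) * ((m : ℝ) ^ k)⁻¹)}.ncard
        ≤ ⌊(130 : ℝ) ^ q⌋₊ * φ k := by
  classical
  intro k hk n _ α hα
  have := hμ.nullSingletonClass
  set ρ : ℝ := ((m : ℝ) ^ k)⁻¹
  have hρ : 0 < ρ := inv_pos.2 (pow_pos (by exact_mod_cast (by omega : 0 < m)) k)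
  obtain ⟨hcK, hc⟩ := hctr k hk
  obtain ⟨Γ, hΓcard, hΓ⟩ :=
    exists_finset_card_le_forall_dist_le_of_isGreatest_packingNum hρ (hφ k hk) hcK hc
  set S := α.filter fun a => ∀ i : Fin (φ k), a ∉ closedBall (ctr k i) (9 / 4 * ρ)
  have hSfar : ∀ a ∈ S, ∀ y ∈ msupp μ, ρ / 4 ≤ dist y a := by
    intro a ha y hy
    obtain ⟨i, hi⟩ := exists_dist_le_two_mul_of_isGreatest_packingNum (hφ k hk) hcK hc hy
    have hai := (Finset.mem_filter.1 ha).2 i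
    rw [mem_closedBall, not_le] at hai
    linarith [dist_triangle a y (ctr k i), dist_comm a y]
  have hSset : {a ∈ (α : Set E) | ∀ i : Fin (φ k), a ∉ closedBall (ctr k i) (9 / 4 * ρ)} = S :=
    (Finset.coe_filter _ _).symm
  rw [hSset, Set.ncard_coe_finset,
    show ⌊(130 : ℝ) ^ q⌋₊ = 130 ^ q by exact_mod_cast Nat.floor_natCast _]
  calc S.card ≤ Γ.card := hα.card_le_card_of_forall_dist_le hμ.isCompact_msupp hr
        (Finset.filter_subset _ _) hΓ hSfar
    _ ≤ φ k * 17 ^ q := hq ▸ hΓcard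
    _ ≤ 130 ^ q * φ k := by rw [mul_comm]; gcongr; norm_num

/-- With `n0 = ⌊130^q⌋`, for every `k ≥ k0`, every `n ≥ 1` and every
`n`-optimal set `α` for `μ`, the number of points of `α` lying outside
`⋃_{σ∈Ω_k} B(c_σ,(9/4)m^{-k})` is at most `n0·φ_k`. -/
theorem stmt11 {E : Type*} [NormedAddCommGroup E] [NormedSpace ℝ E]
    [MeasurableSpace E] [BorelSpace E] [FiniteDimensional ℝ E]
    (q : ℕ) (hq : Module.finrank ℝ E = q)
    (r : ℝ) (hr : 0 < r)
    (μ : MeasureTheory.Measure E) [MeasureTheory.IsProbabilityMeasure μ]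
    (s0 ε0 C1 C2 : ℝ) (hμ : IsAhlfors μ s0 ε0 C1 C2)
    (m : ℕ) (hm : 2 ≤ m) (k0 : ℕ)
    (hk0 : 2 * ((m : ℝ) ^ k0)⁻¹ < ε0)
    (hk0min : ∀ j : ℕ, 2 * ((m : ℝ) ^ j)⁻¹ < ε0 → k0 ≤ j)
    (φ : ℕ → ℕ)
    (hφ : ∀ k, k0 ≤ k →
      IsGreatest {j | PackingNum (msupp μ) (((m : ℝ) ^ k)⁻¹) j} (φ k))
    (ctr : (k : ℕ) → Fin (φ k) → E)
    (hctr : ∀ k, k0 ≤ k → (∀ i, ctr k i ∈ msupp μ) ∧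
      Pairwise fun i i' => Disjoint (Metric.closedBall (ctr k i) (((m : ℝ) ^ k)⁻¹))
        (Metric.closedBall (ctr k i') (((m : ℝ) ^ k)⁻¹))) :
    ∀ k, k0 ≤ k → ∀ n : ℕ, 1 ≤ n → ∀ α : Finset E, IsOptimalSet μ r n α →
      {a ∈ (α : Set E) |
          ∀ i : Fin (φ k), a ∉ Metric.closedBall (ctr k i) ((9 / 4 : ℝ) * ((m : ℝ) ^ k)⁻¹)}.ncard
        ≤ ⌊(130 : ℝ) ^ q⌋₊ * φ k :=
  stmt11_general q hq r hr μ s0 ε0 C1 C2 hμ m hm k0 φ hφ ctr hctr
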